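/- (Theorem 3.3, case γ = 1: unconditional stability of the one-dimensional implicit scheme.) Let α ∈ (1,2], integers N ≥ 2 and N_t ≥ 1, reals τ > 0 and Δx > 0, and nonnegative reals c_{i,k} (1 ≤ i ≤ N-1, 1 ≤ k ≤ N_t). Set ω_{i,k} = -τ·κ_α·c_{i,k}/(Γ(4-α)·(Δx)^α) ≥ 0. Suppose real numbers ε^k_i (0 ≤ i ≤ N, 0 ≤ k ≤ N_t) satisfy ε^k_0 = ε^k_N = 0 for all 1 ≤ k ≤ N_t and, for all 1 ≤ i ≤ N-1 and 0 ≤ k ≤ N_t - 1, (1 - ω_{i,k+1}·g^{α,N}_{i,i})·ε^{k+1}_i - ω_{i,k+1}·Σ_{m=0, m≠i}^{N} g^{α,N}_{i,m}·ε^{k+1}_m = ε^k_i. Then for every 0 ≤ k ≤ N_t: max_{0≤i≤N} |ε^k_i| ≤ max_{0≤i≤N} |ε^0_i|. -/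

import Mathlib

/-!
Write `b = 3 - α` and `S` for the second difference of `x ↦ x ^ b`. Off the diagonal, the
interior coefficient `g_{i,m}` with `d = |i - m| ≥ 2` is the fourth difference
`S(d-1) - 2 S(d) + S(d+1)`, nonnegative because `S` is convex on `[1, ∞)`; for `d = 1` it is
`7 + 3^b - 4·2^b ≥ 0`. On each side of the diagonal these coefficients telescope to at most
`2 - S(1)`, because `S` is antitone on `[1, ∞)`, and `2 (2 - S(1)) = -g_{i,i}`. Since `κ_α < 0`
the weights `ω` are nonnegative, so at an index where `|ε^{k+1}_i|` is maximal the scheme gives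
`(1 - ω g_{i,i}) |ε^{k+1}_i| ≤ max |ε^k| - ω g_{i,i} max |ε^{k+1}|`, that is
`max |ε^{k+1}| ≤ max |ε^k|`.
-/

/-- The coefficients `a^ν_{j,m}` of the second-order discretization of the left
Riemann–Liouville fractional derivative. All powers are real powers. -/
noncomputable def aCoef (ν : ℝ) (j m : ℕ) : ℝ :=
  if m = j then 1
  else if m = 0 then ((j : ℝ) - 1) ^ (3 - ν) - (j : ℝ) ^ (2 - ν) * ((j : ℝ) - 3 + ν)
  else ((j : ℝ) - (m : ℝ) + 1) ^ (3 - ν) - 2 * ((j : ℝ) - (m : ℝ)) ^ (3 - ν)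
    + ((j : ℝ) - (m : ℝ) - 1) ^ (3 - ν)

/-- The coefficients `b^ν_{j,m}` of the second-order discretization of the right
Riemann–Liouville fractional derivative on a grid with `N` subintervals. -/
noncomputable def bCoef (ν : ℝ) (N j m : ℕ) : ℝ :=
  if m = j then 1
  else if m = N then (3 - ν - (N : ℝ) + (j : ℝ)) * ((N : ℝ) - (j : ℝ)) ^ (2 - ν)
    + ((N : ℝ) - (j : ℝ) - 1) ^ (3 - ν)
  else ((m : ℝ) - (j : ℝ) + 1) ^ (3 - ν) - 2 * ((m : ℝ) - (j : ℝ)) ^ (3 - ν)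
    + ((m : ℝ) - (j : ℝ) - 1) ^ (3 - ν)

/-- The coefficients `p^ν_{i,m}` (left-derivative part), for `1 ≤ i ≤ N-1`. -/
noncomputable def pCoef (ν : ℝ) (i m : ℕ) : ℝ :=
  if m < i then aCoef ν (i - 1) m - 2 * aCoef ν i m + aCoef ν (i + 1) m
  else if m = i then -2 * aCoef ν i i + aCoef ν (i + 1) i
  else if m = i + 1 then aCoef ν (i + 1) (i + 1)
  else 0

/-- The coefficients `q^ν_{i,m}` (right-derivative part), for `1 ≤ i ≤ N-1`. -/
noncomputable def qCoef (ν : ℝ) (N i m : ℕ) : ℝ :=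
  if m + 1 < i then 0
  else if m + 1 = i then bCoef ν N (i - 1) (i - 1)
  else if m = i then -2 * bCoef ν N i i + bCoef ν N (i - 1) i
  else bCoef ν N (i - 1) m - 2 * bCoef ν N i m + bCoef ν N (i + 1) m

/-- The Riesz-derivative difference coefficients `g^{ν,N}_{i,m} = p^ν_{i,m} + q^ν_{i,m}`. -/
noncomputable def gCoef (ν : ℝ) (N i m : ℕ) : ℝ := pCoef ν i m + qCoef ν N i m

/-- The L1 coefficients `l_s = (s+1)^(1-γ) - s^(1-γ)` of the Caputo discretization. -/
noncomputable def lCoef (γ : ℝ) (s : ℕ) : ℝ := ((s : ℝ) + 1) ^ (1 - γ) - (s : ℝ) ^ (1 - γ)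

/-- The Riesz constant `κ_ν = 1 / (2 cos(νπ/2))`. -/
noncomputable def kappa (ν : ℝ) : ℝ := 1 / (2 * Real.cos (ν * Real.pi / 2))

/-- The maximum of `|v i|` over `0 ≤ i ≤ N`. -/
noncomputable def maxAbs (N : ℕ) (v : ℕ → ℝ) : ℝ :=
  (Finset.range (N + 1)).sup' Finset.nonempty_range_add_one fun i => |v i|

/-- The maximum of `|v i j|` over `0 ≤ i ≤ Nx`, `0 ≤ j ≤ Ny`. -/
noncomputable def maxAbs2 (Nx Ny : ℕ) (v : ℕ → ℕ → ℝ) : ℝ :=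
  ((Finset.range (Nx + 1)) ×ˢ (Finset.range (Ny + 1))).sup'
    (Finset.nonempty_range_add_one.product Finset.nonempty_range_add_one) fun p => |v p.1 p.2|

open Finset Real

noncomputable def secondDiff (f : ℝ → ℝ) (x : ℝ) : ℝ := f (x + 1) - 2 * f x + f (x - 1)

section SecondDiff

variable {f f' : ℝ → ℝ} {s : Set ℝ} {x : ℝ}

theorem ConvexOn.secondDiff_nonneg (hf : ConvexOn ℝ s f) (h₁ : x - 1 ∈ s)
    (h₂ : x + 1 ∈ s) : 0 ≤ secondDiff f x := by
  have := hf.2 h₁ h₂ (by norm_num : (0 : ℝ) ≤ 1 / 2) (by norm_num : (0 : ℝ) ≤ 1 / 2)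
    (by norm_num)
  simp only [smul_eq_mul] at this
  rw [show 1 / 2 * (x - 1) + 1 / 2 * (x + 1) = x by ring] at this
  unfold secondDiff
  linarith

theorem ConcaveOn.secondDiff_nonpos (hf : ConcaveOn ℝ s f) (h₁ : x - 1 ∈ s)
    (h₂ : x + 1 ∈ s) : secondDiff f x ≤ 0 := by
  have := hf.neg.secondDiff_nonneg h₁ h₂
  unfold secondDiff at this ⊢
  simp only [Pi.neg_apply] at this
  linarith

theorem Continuous.secondDiff (hf : Continuous f) : Continuous (secondDiff f) := by
  unfold _root_.secondDiff; fun_prop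

theorem hasDerivAt_secondDiff (hf : ∀ y, 0 < y → HasDerivAt f (f' y) y) (hx : 1 < x) :
    HasDerivAt (secondDiff f) (secondDiff f' x) x :=
  (((hf _ (by linarith)).comp_add_const x 1).sub
    (((hf x (by linarith)).const_mul 2))).add ((hf _ (by linarith)).comp_sub_const x 1)

theorem secondDiff_const_mul (c : ℝ) :
    secondDiff (fun y => c * f y) x = c * secondDiff f x := by
  unfold secondDiff; ring

end SecondDiff

theorem convexOn_rpow_of_nonpos {p : ℝ} (hp : p ≤ 0) :
    ConvexOn ℝ (Set.Ioi 0) fun x : ℝ => x ^ p := by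
  refine convexOn_of_hasDerivWithinAt2_nonneg (f' := fun x => p * x ^ (p - 1))
    (f'' := fun x => p * ((p - 1) * x ^ (p - 1 - 1))) (convex_Ioi 0)
    (continuousOn_id.rpow_const fun x hx => Or.inl (ne_of_gt hx)) ?_ ?_ ?_ <;>
    rw [interior_Ioi] <;> intro x (hx : 0 < x)
  · exact (hasDerivAt_rpow_const (Or.inl hx.ne')).hasDerivWithinAt
  · exact ((hasDerivAt_rpow_const (Or.inl hx.ne')).const_mul p).hasDerivWithinAt
  · have := rpow_pos_of_pos hx (p - 1 - 1)
    have : 0 ≤ p * (p - 1) := mul_nonneg_of_nonpos_of_nonpos hp (by linarith)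
    rw [← mul_assoc]; positivity

section RpowSecondDiff

variable {b x : ℝ}

theorem hasDerivAt_secondDiff_rpow (p : ℝ) (hx : 1 < x) :
    HasDerivAt (secondDiff (· ^ p)) (p * secondDiff (· ^ (p - 1)) x) x := by
  rw [← secondDiff_const_mul]
  exact hasDerivAt_secondDiff (fun y hy => hasDerivAt_rpow_const (Or.inl hy.ne')) hx

theorem antitoneOn_secondDiff_rpow (hb₁ : 1 ≤ b) (hb₂ : b ≤ 2) :
    AntitoneOn (secondDiff (· ^ b)) (Set.Ici 1) := by
  refine antitoneOn_of_hasDerivWithinAt_nonpos (f' := fun x => b * secondDiff (· ^ (b - 1)) x)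
    (convex_Ici 1)
    ((continuous_rpow_const (by linarith)).secondDiff.continuousOn) ?_ ?_ <;>
    rw [interior_Ici] <;> intro x (hx : 1 < x)
  · exact (hasDerivAt_secondDiff_rpow b hx).hasDerivWithinAt
  · have := (concaveOn_rpow (p := b - 1) (by linarith) (by linarith)).secondDiff_nonpos
      (x := x) (Set.mem_Ici.2 (by linarith)) (Set.mem_Ici.2 (by linarith))
    nlinarith

theorem convexOn_secondDiff_rpow (hb₁ : 1 ≤ b) (hb₂ : b ≤ 2) :
    ConvexOn ℝ (Set.Ici 1) (secondDiff (· ^ b)) := by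
  refine convexOn_of_hasDerivWithinAt2_nonneg (f' := fun x => b * secondDiff (· ^ (b - 1)) x)
    (f'' := fun x => b * ((b - 1) * secondDiff (· ^ (b - 1 - 1)) x)) (convex_Ici 1)
    ((continuous_rpow_const (by linarith)).secondDiff.continuousOn) ?_ ?_ ?_ <;>
    rw [interior_Ici] <;> intro x (hx : 1 < x)
  · exact (hasDerivAt_secondDiff_rpow b hx).hasDerivWithinAt
  · exact ((hasDerivAt_secondDiff_rpow (b - 1) hx).const_mul b).hasDerivWithinAt
  · have := (convexOn_rpow_of_nonpos (p := b - 1 - 1) (by linarith)).secondDiff_nonneg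
      (x := x) (Set.mem_Ioi.2 (by linarith)) (Set.mem_Ioi.2 (by linarith))
    have : 0 ≤ b * (b - 1) := mul_nonneg (by linarith) (by linarith)
    rw [← mul_assoc]; positivity

theorem secondDiff_rpow_one (hb : 0 < b) : secondDiff (· ^ b) 1 = 2 ^ b - 2 := by
  norm_num [secondDiff, zero_rpow hb.ne']

theorem secondDiff_rpow_two : secondDiff (· ^ b) 2 = 3 ^ b - 2 * 2 ^ b + 1 := by
  norm_num [secondDiff]

theorem two_rpow_le_four (hb : b ≤ 2) : (2 : ℝ) ^ b ≤ 4 := by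
  calc (2 : ℝ) ^ b ≤ 2 ^ (2 : ℝ) := rpow_le_rpow_of_exponent_le one_le_two hb
    _ = 4 := by norm_num

-- With `t = 2 ^ (b - 2) ≤ 1` and `3 ^ b = 9 t ^ (logb 2 3)`, Bernoulli's inequality reduces this
-- to `9 logb 2 3 ≤ 16`, i.e. `3 ^ 9 ≤ 2 ^ 16`.
theorem four_mul_two_rpow_le_three_rpow_add_seven (hb : b ≤ 2) :
    4 * (2 : ℝ) ^ b ≤ 3 ^ b + 7 := by
  have hc₁ : 1 ≤ logb 2 3 := by
    rw [le_logb_iff_rpow_le one_lt_two three_pos]; norm_num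
  have hc₂ : 9 * logb 2 3 ≤ 16 := by
    have h := log_le_log (by norm_num) (show (3 : ℝ) ^ 9 ≤ 2 ^ 16 by norm_num)
    rw [log_pow, log_pow] at h
    rw [logb, mul_div_assoc', div_le_iff₀ (log_pos one_lt_two)]
    push_cast at h
    linarith
  obtain ⟨t, ht₀, ht₁, h2, h3⟩ : ∃ t : ℝ, 0 < t ∧ t ≤ 1 ∧
      (2 : ℝ) ^ b = 4 * t ∧ (3 : ℝ) ^ b = 9 * t ^ logb 2 3 := by
    refine ⟨2 ^ (b - 2), rpow_pos_of_pos two_pos _,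
      rpow_le_one_of_one_le_of_nonpos one_le_two (by linarith), ?_, ?_⟩
    · rw [show (4 : ℝ) = 2 ^ (2 : ℝ) by norm_num, ← rpow_add two_pos]; ring_nf
    · rw [← rpow_mul zero_le_two, mul_comm (b - 2), rpow_mul zero_le_two,
        rpow_logb two_pos (by norm_num) three_pos, show (9 : ℝ) = 3 ^ (2 : ℝ) by norm_num,
        ← rpow_add three_pos]
      ring_nf
  have bernoulli := one_add_mul_self_le_rpow_one_add (s := t - 1) (by linarith) hc₁
  rw [add_sub_cancel] at bernoulli
  rw [h2, h3]
  nlinarith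

end RpowSecondDiff

/-- `d = 1` is special: there the diagonal entries `a_{j,j} = b_{j,j} = 1` take the place of the
second difference at `0`. -/
noncomputable def rieszWeight (b : ℝ) (d : ℕ) : ℝ :=
  if d = 1 then 2 - 2 * secondDiff (· ^ b) 1 + secondDiff (· ^ b) 2
  else secondDiff (secondDiff (· ^ b)) d

section RieszWeight

variable {b : ℝ}

theorem rieszWeight_nonneg (hb₁ : 1 ≤ b) (hb₂ : b ≤ 2) {d : ℕ} (hd : 0 < d) :
    0 ≤ rieszWeight b d := by
  unfold rieszWeight
  split_ifs with h
  · rw [secondDiff_rpow_one (by linarith), secondDiff_rpow_two]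
    linarith [four_mul_two_rpow_le_three_rpow_add_seven hb₂]
  · have hd₂ : (2 : ℝ) ≤ d := by exact_mod_cast (show 2 ≤ d by omega)
    exact (convexOn_secondDiff_rpow hb₁ hb₂).secondDiff_nonneg
      (Set.mem_Ici.2 (by linarith)) (Set.mem_Ici.2 (by linarith))

theorem sum_rieszWeight_eq {n : ℕ} (hn : 2 ≤ n) :
    ∑ d ∈ Ioo 0 n, rieszWeight b d =
      2 - secondDiff (· ^ b) 1 + (secondDiff (· ^ b) n - secondDiff (· ^ b) (n - 1)) := by
  induction n, hn using Nat.le_induction with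
  | base =>
    rw [show Ioo 0 2 = {1} by decide, sum_singleton, rieszWeight, if_pos rfl]
    norm_num
    ring
  | succ n hn ih =>
    rw [← Finset.Ico_add_one_left_eq_Ioo, Finset.sum_Ico_succ_top (by omega),
      Finset.Ico_add_one_left_eq_Ioo, ih, rieszWeight, if_neg (by omega)]
    simp only [secondDiff]
    push_cast
    ring_nf

theorem sum_rieszWeight_le (hb₁ : 1 ≤ b) (hb₂ : b ≤ 2) (n : ℕ) :
    ∑ d ∈ Ioo 0 n, rieszWeight b d ≤ 2 - secondDiff (· ^ b) 1 := by
  rcases lt_or_ge n 2 with hn | hn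
  · rw [show Ioo 0 n = ∅ by ext; simp only [mem_Ioo, notMem_empty, iff_false]; omega,
      sum_empty, secondDiff_rpow_one (by linarith)]
    linarith [two_rpow_le_four hb₂]
  · have hn' : (2 : ℝ) ≤ n := by exact_mod_cast hn
    have := antitoneOn_secondDiff_rpow hb₁ hb₂
      (Set.mem_Ici.2 (by linarith : (1 : ℝ) ≤ n - 1)) (Set.mem_Ici.2 (by linarith : (1 : ℝ) ≤ n))
      (by linarith)
    rw [sum_rieszWeight_eq hn]
    linarith

end RieszWeight

section Coefficients

variable {ν : ℝ} {N i m j : ℕ}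

theorem aCoef_self : aCoef ν j j = 1 := if_pos rfl

theorem bCoef_self : bCoef ν N j j = 1 := if_pos rfl

theorem aCoef_of_pos_of_lt (hm : 0 < m) (hmj : m < j) :
    aCoef ν j m = secondDiff (· ^ (3 - ν)) ((j : ℝ) - m) := by
  rw [aCoef, if_neg hmj.ne, if_neg hm.ne']; rfl

theorem bCoef_of_lt_of_lt (hjm : j < m) (hmN : m < N) :
    bCoef ν N j m = secondDiff (· ^ (3 - ν)) ((m : ℝ) - j) := by
  rw [bCoef, if_neg hjm.ne', if_neg hmN.ne]; rfl

theorem gCoef_self (hi : 0 < i) (hiN : i < N) :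
    gCoef ν N i i = 2 * secondDiff (· ^ (3 - ν)) 1 - 4 := by
  rw [gCoef, pCoef, if_neg (lt_irrefl i), if_pos rfl, qCoef, if_neg (by omega), if_neg (by omega),
    if_pos rfl, aCoef_self, bCoef_self, aCoef_of_pos_of_lt hi (by omega),
    bCoef_of_lt_of_lt (by omega : i - 1 < i) hiN]
  push_cast [Nat.cast_sub (show 1 ≤ i from hi)]
  ring_nf

theorem gCoef_of_lt (hm : 0 < m) (hmi : m < i) (hiN : i < N) :
    gCoef ν N i m = rieszWeight (3 - ν) (i - m) := by
  rw [gCoef, pCoef, if_pos hmi, qCoef, rieszWeight, aCoef_of_pos_of_lt hm hmi,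
    aCoef_of_pos_of_lt hm (by omega : m < i + 1)]
  rcases (show m + 1 = i ∨ m + 1 < i by omega) with rfl | hlt
  · rw [if_neg (lt_irrefl _), if_pos rfl, if_pos (by omega), Nat.add_sub_cancel, aCoef_self,
      bCoef_self]
    push_cast
    ring_nf
  · rw [if_pos hlt, if_neg (by omega), aCoef_of_pos_of_lt hm (by omega : m < i - 1)]
    simp only [secondDiff]
    push_cast [Nat.cast_sub hmi.le, Nat.cast_sub (show 1 ≤ i by omega)]
    ring_nf

theorem gCoef_of_gt (hi : 0 < i) (him : i < m) (hmN : m < N) :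
    gCoef ν N i m = rieszWeight (3 - ν) (m - i) := by
  rw [gCoef, pCoef, if_neg (by omega : ¬m < i), if_neg him.ne', qCoef,
    if_neg (by omega : ¬m + 1 < i), if_neg (by omega : m + 1 ≠ i), if_neg him.ne', rieszWeight,
    bCoef_of_lt_of_lt (by omega : i - 1 < m) hmN, bCoef_of_lt_of_lt him hmN]
  rcases (show i + 1 = m ∨ i + 1 < m by omega) with rfl | hlt
  · rw [if_pos rfl, if_pos (by omega), aCoef_self, bCoef_self]
    push_cast [Nat.cast_sub (show 1 ≤ i from hi)]
    ring_nf
  · rw [if_neg hlt.ne', if_neg (by omega), bCoef_of_lt_of_lt hlt hmN]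
    simp only [secondDiff]
    push_cast [Nat.cast_sub him.le, Nat.cast_sub (show 1 ≤ i from hi)]
    ring_nf

theorem gCoef_nonneg_of_ne (hν₁ : 1 ≤ ν) (hν₂ : ν ≤ 2) (hi : i ∈ Ioo 0 N)
    (hm : m ∈ Ioo 0 N) (hmi : m ≠ i) : 0 ≤ gCoef ν N i m := by
  rw [mem_Ioo] at hi hm
  rcases hmi.lt_or_gt with h | h
  · rw [gCoef_of_lt hm.1 h hi.2]; exact rieszWeight_nonneg (by linarith) (by linarith) (by omega)
  · rw [gCoef_of_gt hi.1 h hm.2]; exact rieszWeight_nonneg (by linarith) (by linarith) (by omega)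

theorem sum_erase_gCoef_le_neg_gCoef_self (hν₁ : 1 ≤ ν) (hν₂ : ν ≤ 2)
    (hi : i ∈ Ioo 0 N) : ∑ m ∈ (Ioo 0 N).erase i, gCoef ν N i m ≤ -gCoef ν N i i := by
  rw [mem_Ioo] at hi
  have hsplit : (Ioo 0 N).erase i = Ioo 0 i ∪ Ioo i N := by
    ext m; simp only [mem_erase, mem_Ioo, mem_union]; omega
  have hleft : ∑ m ∈ Ioo 0 i, gCoef ν N i m = ∑ d ∈ Ioo 0 i, rieszWeight (3 - ν) d := by
    refine sum_nbij' (i - ·) (i - ·) ?_ ?_ ?_ ?_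
      fun m hm => gCoef_of_lt (mem_Ioo.1 hm).1 (mem_Ioo.1 hm).2 hi.2
    all_goals intro a ha; simp only [mem_Ioo] at ha ⊢; omega
  have hright :
      ∑ m ∈ Ioo i N, gCoef ν N i m = ∑ d ∈ Ioo 0 (N - i), rieszWeight (3 - ν) d := by
    refine sum_nbij' (· - i) (· + i) ?_ ?_ ?_ ?_
      fun m hm => gCoef_of_gt hi.1 (mem_Ioo.1 hm).1 (mem_Ioo.1 hm).2
    all_goals intro a ha; simp only [mem_Ioo] at ha ⊢; omega
  have hdisj : Disjoint (Ioo 0 i) (Ioo i N) :=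
    disjoint_left.2 fun m h₁ h₂ => by simp only [mem_Ioo] at h₁ h₂; omega
  rw [hsplit, sum_union hdisj, hleft, hright, gCoef_self hi.1 hi.2]
  linarith [sum_rieszWeight_le (b := 3 - ν) (by linarith) (by linarith) i,
    sum_rieszWeight_le (b := 3 - ν) (by linarith) (by linarith) (N - i)]

end Coefficients

theorem kappa_neg {ν : ℝ} (hν₁ : 1 < ν) (hν₂ : ν < 3) : kappa ν < 0 := by
  have hcos : cos (ν * π / 2) < 0 := by
    apply cos_neg_of_pi_div_two_lt_of_lt <;> nlinarith [pi_pos]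
  rw [kappa]
  exact one_div_neg.2 (by linarith)

theorem neg_kappa_div_nonneg {ν τ c Δx : ℝ} (hν₁ : 1 < ν) (hν₂ : ν < 3) (hτ : 0 ≤ τ)
    (hc : 0 ≤ c) (hΔx : 0 < Δx) :
    0 ≤ -(τ * kappa ν * c) / (Gamma (4 - ν) * Δx ^ ν) := by
  refine div_nonneg (neg_nonneg.2 ?_)
    (mul_pos (Gamma_pos_of_pos (by linarith)) (rpow_pos_of_pos hΔx ν)).le
  exact mul_nonpos_of_nonpos_of_nonneg
    (mul_nonpos_of_nonneg_of_nonpos hτ (kappa_neg hν₁ hν₂).le) hc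

section MaxAbs

variable {N : ℕ} {v : ℕ → ℝ}

theorem abs_le_maxAbs {i : ℕ} (hi : i ≤ N) : |v i| ≤ maxAbs N v :=
  le_sup' (fun j => |v j|) (mem_range.2 (Nat.lt_succ_of_le hi))

theorem maxAbs_nonneg : 0 ≤ maxAbs N v :=
  (abs_nonneg _).trans (abs_le_maxAbs (Nat.zero_le N))

theorem exists_maxAbs_eq_abs : ∃ i ≤ N, maxAbs N v = |v i| := by
  obtain ⟨i, hi, h⟩ := exists_mem_eq_sup' nonempty_range_add_one fun j => |v j|
  exact ⟨i, Nat.le_of_lt_succ (mem_range.1 hi), h⟩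

end MaxAbs

theorem sum_erase_range_eq_sum_erase_Ioo {N i : ℕ} {f : ℕ → ℝ} (h₀ : f 0 = 0)
    (hN : f N = 0) : ∑ m ∈ (range (N + 1)).erase i, f m = ∑ m ∈ (Ioo 0 N).erase i, f m := by
  refine (sum_subset (fun m => by simp only [mem_erase, mem_Ioo, mem_range]; omega) ?_).symm
  intro m hm hm'
  simp only [mem_erase, mem_Ioo, mem_range] at hm hm'
  obtain rfl | rfl : m = 0 ∨ m = N := by omega
  exacts [h₀, hN]

theorem maxAbs_le_of_implicit_step {N : ℕ} {g : ℕ → ℕ → ℝ} {w u v : ℕ → ℝ}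
    (hu₀ : u 0 = 0) (huN : u N = 0)
    (hw : ∀ i ∈ Ioo 0 N, 0 ≤ w i)
    (hg : ∀ i ∈ Ioo 0 N, ∀ m ∈ (Ioo 0 N).erase i, 0 ≤ g i m)
    (hdom : ∀ i ∈ Ioo 0 N, ∑ m ∈ (Ioo 0 N).erase i, g i m ≤ -g i i)
    (hstep : ∀ i ∈ Ioo 0 N,
      (1 - w i * g i i) * u i - w i * ∑ m ∈ (range (N + 1)).erase i, g i m * u m = v i) :
    maxAbs N u ≤ maxAbs N v := by
  obtain ⟨i, hiN, hmax⟩ := exists_maxAbs_eq_abs (N := N) (v := u)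
  rcases (show i = 0 ∨ i = N ∨ i ∈ Ioo 0 N by rw [mem_Ioo]; omega) with rfl | rfl | hi
  · rw [hmax, hu₀, abs_zero]; exact maxAbs_nonneg
  · rw [hmax, huN, abs_zero]; exact maxAbs_nonneg
  set M := maxAbs N u
  have hsum : |∑ m ∈ (Ioo 0 N).erase i, g i m * u m| ≤ -g i i * M :=
    calc |∑ m ∈ (Ioo 0 N).erase i, g i m * u m|
        ≤ ∑ m ∈ (Ioo 0 N).erase i, g i m * M := by
          refine (abs_sum_le_sum_abs _ _).trans (sum_le_sum fun m hm => ?_)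
          rw [abs_mul, abs_of_nonneg (hg i hi m hm)]
          exact mul_le_mul_of_nonneg_left
            (abs_le_maxAbs (by rw [mem_erase, mem_Ioo] at hm; omega)) (hg i hi m hm)
      _ ≤ -g i i * M := by
          rw [← sum_mul]; exact mul_le_mul_of_nonneg_right (hdom i hi) maxAbs_nonneg
  have hgii : 0 ≤ -g i i := (sum_nonneg (hg i hi)).trans (hdom i hi)
  have hcoef : 0 ≤ 1 - w i * g i i := by nlinarith [hw i hi]
  have hvi : (1 - w i * g i i) * u i = v i + w i * ∑ m ∈ (Ioo 0 N).erase i, g i m * u m := by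
    rw [← sum_erase_range_eq_sum_erase_Ioo (by rw [hu₀, mul_zero]) (by rw [huN, mul_zero])]
    linarith [hstep i hi]
  have key : (1 - w i * g i i) * M ≤ maxAbs N v + w i * (-g i i * M) :=
    calc (1 - w i * g i i) * M = |v i + w i * ∑ m ∈ (Ioo 0 N).erase i, g i m * u m| := by
          rw [hmax, ← hvi, abs_mul, abs_of_nonneg hcoef]
      _ ≤ |v i| + |w i * ∑ m ∈ (Ioo 0 N).erase i, g i m * u m| := abs_add_le _ _
      _ = |v i| + w i * |∑ m ∈ (Ioo 0 N).erase i, g i m * u m| := by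
          rw [abs_mul, abs_of_nonneg (hw i hi)]
      _ ≤ maxAbs N v + w i * (-g i i * M) :=
          add_le_add (abs_le_maxAbs hiN) (mul_le_mul_of_nonneg_left hsum (hw i hi))
  linarith

theorem implicit_1d_stable_gamma_one_general (α : ℝ) (hα : α ∈ Set.Ioc (1:ℝ) 2)
    (N Nt : ℕ)
    (τ Δx : ℝ) (hτ : 0 < τ) (hΔx : 0 < Δx)
    (c : ℕ → ℕ → ℝ)
    (hc : ∀ i k : ℕ, 1 ≤ i → i ≤ N - 1 → 1 ≤ k → k ≤ Nt → 0 ≤ c i k)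
    (ω : ℕ → ℕ → ℝ)
    (hω : ∀ i k : ℕ, 1 ≤ i → i ≤ N - 1 → 1 ≤ k → k ≤ Nt →
      ω i k = -(τ * kappa α * c i k) / (Real.Gamma (4 - α) * Δx ^ α))
    (ε : ℕ → ℕ → ℝ)
    (hbc : ∀ k : ℕ, 1 ≤ k → k ≤ Nt → ε k 0 = 0 ∧ ε k N = 0)
    (hscheme : ∀ i k : ℕ, 1 ≤ i → i ≤ N - 1 → k + 1 ≤ Nt →
      (1 - ω i (k + 1) * gCoef α N i i) * ε (k + 1) i
        - ω i (k + 1) * ∑ m ∈ (Finset.range (N + 1)).erase i, gCoef α N i m * ε (k + 1) m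
      = ε k i) :
    ∀ k : ℕ, k ≤ Nt → maxAbs N (ε k) ≤ maxAbs N (ε 0) := by
  intro k hk
  induction k with
  | zero => exact le_rfl
  | succ k ih =>
    refine le_trans ?_ (ih (by omega))
    obtain ⟨hε₀, hεN⟩ := hbc (k + 1) (by omega) hk
    refine maxAbs_le_of_implicit_step (g := gCoef α N) (w := fun i => ω i (k + 1)) hε₀ hεN
      (fun i hi => ?_) (fun i hi m hm => ?_) (fun i hi => ?_) (fun i hi => ?_)
    · obtain ⟨hi₀, hiN⟩ := mem_Ioo.1 hi
      rw [hω i (k + 1) (by omega) (by omega) (by omega) hk]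
      exact neg_kappa_div_nonneg hα.1 (by linarith [hα.2]) hτ.le
        (hc i (k + 1) (by omega) (by omega) (by omega) hk) hΔx
    · exact gCoef_nonneg_of_ne hα.1.le hα.2 hi (mem_of_mem_erase hm) (ne_of_mem_erase hm)
    · exact sum_erase_gCoef_le_neg_gCoef_self hα.1.le hα.2 hi
    · obtain ⟨hi₀, hiN⟩ := mem_Ioo.1 hi
      exact hscheme i k (by omega) (by omega) hk

/-- Theorem 3.3 (case `γ = 1`): unconditional stability of the one-dimensional
implicit finite difference scheme. -/
theorem implicit_1d_stable_gamma_one (α : ℝ) (hα : α ∈ Set.Ioc (1:ℝ) 2)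
    (N Nt : ℕ) (hN : 2 ≤ N) (hNt : 1 ≤ Nt)
    (τ Δx : ℝ) (hτ : 0 < τ) (hΔx : 0 < Δx)
    (c : ℕ → ℕ → ℝ)
    (hc : ∀ i k : ℕ, 1 ≤ i → i ≤ N - 1 → 1 ≤ k → k ≤ Nt → 0 ≤ c i k)
    (ω : ℕ → ℕ → ℝ)
    (hω : ∀ i k : ℕ, 1 ≤ i → i ≤ N - 1 → 1 ≤ k → k ≤ Nt →
      ω i k = -(τ * kappa α * c i k) / (Real.Gamma (4 - α) * Δx ^ α))
    (ε : ℕ → ℕ → ℝ)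
    (hbc : ∀ k : ℕ, 1 ≤ k → k ≤ Nt → ε k 0 = 0 ∧ ε k N = 0)
    (hscheme : ∀ i k : ℕ, 1 ≤ i → i ≤ N - 1 → k + 1 ≤ Nt →
      (1 - ω i (k + 1) * gCoef α N i i) * ε (k + 1) i
        - ω i (k + 1) * ∑ m ∈ (Finset.range (N + 1)).erase i, gCoef α N i m * ε (k + 1) m
      = ε k i) :
    ∀ k : ℕ, k ≤ Nt → maxAbs N (ε k) ≤ maxAbs N (ε 0) :=
  implicit_1d_stable_gamma_one_general α hα N Nt τ Δx hτ hΔx c hc ω hω ε hbc hscheme
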